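/- arXiv:2411.17930 — 3 statements merged into one kernel-verified Lean document; each statement's English description precedes it below -/
import Mathlib

section
/- Let K be a field of characteristic 0, and let P, Q ∈ K[x] with deg P ≤ 3, deg Q ≤ 2. If f(x) = P(x)² − Q(x)³ is a separable polynomial and x₀ is a common root of f and Q, then x₀ is a root of P, and moreover x₀ is a multiple root of f — a contradiction. Hence f and Q have no common roots. -/
open Polynomial

/-- If `f = P² - Q³` is separable (squarefree) with `deg P ≤ 3`, `deg Q ≤ 2` over a field of
characteristic 0, then `f` and `Q` have no common roots. -/
theorem stmt0 (K : Type*) [Field K] [CharZero K] (P Q : K[X])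
    (hP : P.degree ≤ 3) (hQ : Q.degree ≤ 2)
    (hf : Squarefree (P ^ 2 - Q ^ 3)) :
    ∀ x₀ : K, ¬ ((P ^ 2 - Q ^ 3).eval x₀ = 0 ∧ Q.eval x₀ = 0) := by
  rintro x₀ ⟨h1, h2⟩
  have hPx : P.eval x₀ = 0 := by
    have : P.eval x₀ ^ 2 - Q.eval x₀ ^ 3 = 0 := by simpa using h1
    rw [h2] at this
    simpa [pow_eq_zero_iff] using this
  have hdP : (X - C x₀) ∣ P := dvd_iff_isRoot.2 hPx
  have hdQ : (X - C x₀) ∣ Q := dvd_iff_isRoot.2 h2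
  have hd2 : (X - C x₀) ^ 2 ∣ P ^ 2 - Q ^ 3 :=
    dvd_sub (pow_dvd_pow_of_dvd hdP 2)
      ((pow_dvd_pow _ (by norm_num)).trans (pow_dvd_pow_of_dvd hdQ 3))
  exact (Polynomial.not_isUnit_X_sub_C x₀) (hf _ (by rwa [← sq]))
end

section
/- Let f(x) ∈ ℂ[x] be a polynomial of degree 6 without multiple roots. Then there are only finitely many pairs of polynomials (P, Q) with deg P ≤ 3, deg Q ≤ 2 such that f = P² − Q³. -/
/-!
Identify a pair `(P, Q)` with `deg P ≤ 3`, `deg Q ≤ 2` with its seven coefficients; the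
decompositions of `f` are then the points of the affine scheme cut out by the coefficients of
`P² - Q³ - f`. At each such point the tangent space vanishes: a first-order deformation
`(P + P', Q + Q')`, all products of coefficients of `P'` and `Q'` being zero, satisfies
`2 P P' = 3 Q² Q'`. Since `f` is squarefree, `P` and `Q` are coprime, and since `deg f = 6`,
either `deg P = 3`, and then `P ∣ Q'` forces `Q' = 0`, or `deg Q = 2`, and then `Q² ∣ P'` forces
`P' = 0`; either way `P' = Q' = 0`. So the maximal ideal `m` of the point satisfies `m = m²` in
the coordinate ring, which makes it a minimal prime, and a Noetherian ring has only finitely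
many minimal primes.
-/

open Polynomial

universe u v

namespace Polynomial

section Semiring

variable {R S : Type*} [Semiring R] [Semiring S] {n : ℕ}

noncomputable def ofFinCoeffs (v : Fin n → R) : R[X] := ∑ i : Fin n, monomial i (v i)

theorem coeff_ofFinCoeffs (v : Fin n → R) (k : ℕ) :
    (ofFinCoeffs v).coeff k = if h : k < n then v ⟨k, h⟩ else 0 := by
  classical
  rw [ofFinCoeffs, ← ofFn_eq_sum_monomial]
  split_ifs with h
  · exact ofFn_coeff_eq_val_of_lt v h
  · exact ofFn_coeff_eq_zero_of_ge v (not_lt.mp h)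

theorem natDegree_ofFinCoeffs_le (v : Fin (n + 1) → R) : (ofFinCoeffs v).natDegree ≤ n :=
  natDegree_le_iff_coeff_eq_zero.mpr fun k hk => by
    rw [coeff_ofFinCoeffs, dif_neg (by omega)]

theorem ofFinCoeffs_coeff {p : R[X]} (hp : p.natDegree ≤ n) :
    ofFinCoeffs (fun i : Fin (n + 1) => p.coeff i) = p := by
  ext k
  rw [coeff_ofFinCoeffs]
  split_ifs with h
  · rfl
  · exact (coeff_eq_zero_of_natDegree_lt (by omega)).symm

theorem ofFinCoeffs_add (v w : Fin n → R) :
    ofFinCoeffs (v + w) = ofFinCoeffs v + ofFinCoeffs w := by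
  simp [ofFinCoeffs, Finset.sum_add_distrib]

theorem map_ofFinCoeffs (f : R →+* S) (v : Fin n → R) :
    (ofFinCoeffs v).map f = ofFinCoeffs (f ∘ v) := by
  simp [ofFinCoeffs, Polynomial.map_sum]

theorem mul_eq_zero_of_coeff_mul_coeff_eq_zero {p q : R[X]}
    (h : ∀ i j, p.coeff i * q.coeff j = 0) : p * q = 0 := by
  ext n
  rw [coeff_mul, coeff_zero]
  exact Finset.sum_eq_zero fun _ _ => h _ _

theorem ofFinCoeffs_mul_self_eq_zero {v : Fin n → R} (hv : ∀ i j, v i * v j = 0) :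
    ofFinCoeffs v * ofFinCoeffs v = 0 :=
  mul_eq_zero_of_coeff_mul_coeff_eq_zero fun i j => by
    simp only [coeff_ofFinCoeffs]
    split_ifs <;> simp [hv]

end Semiring

theorem eq_zero_of_dvd_of_natDegree_lt_of_isUnit_leadingCoeff {R : Type*} [CommRing R]
    {p q : R[X]} (hp : IsUnit p.leadingCoeff) (hpq : p ∣ q) (hdeg : q.natDegree < p.natDegree) :
    q = 0 := by
  by_contra hq
  refine (monic_of_isUnit_leadingCoeff_inv_smul hp).not_dvd_of_natDegree_lt hq ?_
    (dvd_trans ⟨C ↑hp.unit, ?_⟩ hpq)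
  · rwa [natDegree_smul_of_smul_regular _ (isSMulRegular_of_group _)]
  · rw [Units.smul_def, smul_eq_C_mul, mul_right_comm, ← C_mul, Units.inv_mul, C_1, one_mul]

theorem isUnit_leadingCoeff_map_algebraMap {K B : Type*} [Field K] [CommRing B] [Algebra K B]
    {p : K[X]} (hp : p ≠ 0) : IsUnit (p.map (algebraMap K B)).leadingCoeff := by
  nontriviality B
  rw [leadingCoeff_map]
  exact (leadingCoeff_ne_zero.mpr hp).isUnit.map _

end Polynomial

/-- A finitely generated idempotent ideal is generated by an idempotent `e`, and `e * (1 - e) = 0`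
puts `e` into every prime contained in `p`. -/
theorem Ideal.mem_minimalPrimes_of_le_sq {A : Type*} [CommRing A] {p : Ideal A} [hp : p.IsPrime]
    (hfg : p.FG) (h : p ≤ p ^ 2) : p ∈ minimalPrimes A := by
  obtain ⟨e, he, rfl⟩ :=
    (p.isIdempotentElem_iff_of_fg hfg).mp (le_antisymm Ideal.mul_le_left (sq p ▸ h))
  refine ⟨⟨hp, bot_le⟩, fun q ⟨hq, _⟩ hqp => (Ideal.span_singleton_le_iff_mem _).mpr ?_⟩
  have hq1 : 1 - e ∉ q := fun h1 => hp.ne_top <| (Ideal.eq_top_iff_one _).mpr <| by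
    simpa using Ideal.add_mem _ (Ideal.mem_span_singleton_self e) (hqp h1)
  have hq0 : e * (1 - e) ∈ q := by
    rw [mul_sub, mul_one, he.eq, sub_self]
    exact q.zero_mem
  exact (hq.mem_or_mem hq0).resolve_right hq1

namespace MvPolynomial

variable {K : Type u} {σ : Type v} [CommRing K]

theorem ker_aeval_eq_span_X_sub_C (x : σ → K) :
    RingHom.ker (aeval x) = Ideal.span (Set.range fun s => X s - C (x s)) := by
  refine le_antisymm (fun g hg => ?_) (Ideal.span_le.mpr ?_)
  · have hsub : ∀ g : MvPolynomial σ K,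
        g - C (aeval x g) ∈ Ideal.span (Set.range fun s => X s - C (x s)) := by
      intro g
      induction g using MvPolynomial.induction_on with
      | C a => simp
      | add p q hp hq =>
        rw [map_add, map_add, add_sub_add_comm]
        exact add_mem hp hq
      | mul_X p s hp =>
        rw [show p * X s - C (aeval x (p * X s))
            = (p - C (aeval x p)) * X s + C (aeval x p) * (X s - C (x s)) by simp; ring]
        exact add_mem (Ideal.mul_mem_right _ _ hp)
          (Ideal.mul_mem_left _ _ (Ideal.subset_span ⟨s, rfl⟩))
    simpa [RingHom.mem_ker.mp hg] using hsub g
  · rintro _ ⟨s, rfl⟩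
    simp

theorem ker_aeval_injective :
    Function.Injective fun x : σ → K => RingHom.ker (aeval (R := K) x) := by
  intro x y (hxy : RingHom.ker (aeval x) = RingHom.ker (aeval y))
  funext s
  have : X s - C (x s) ∈ RingHom.ker (aeval (R := K) y) := hxy ▸ by simp
  simpa [sub_eq_zero, eq_comm] using this

/-- The test algebra is `MvPolynomial σ K ⧸ (I ⊔ m²)` with `ε s` the class of `X s - C (x s)`. -/
theorem ker_aeval_le_sup_sq {I : Ideal (MvPolynomial σ K)} {x : σ → K}
    (hx : ∀ (B : Type (max u v)) [CommRing B] [Algebra K B] (ε : σ → B),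
      (∀ s t, ε s * ε t = 0) → I ≤ RingHom.ker (aeval fun s => algebraMap K B (x s) + ε s) →
        ε = 0) :
    RingHom.ker (aeval x) ≤ I ⊔ RingHom.ker (aeval x) ^ 2 := by
  set J := I ⊔ RingHom.ker (aeval x) ^ 2
  have hX : ∀ s, X s - C (x s) ∈ RingHom.ker (aeval x) := fun s => by simp
  have hmk : (aeval fun s => algebraMap K _ (x s) + Ideal.Quotient.mk J (X s - C (x s))) =
      Ideal.Quotient.mkₐ K J :=
    algHom_ext fun s => by
      simp [IsScalarTower.algebraMap_apply K (MvPolynomial σ K) (MvPolynomial σ K ⧸ J)]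
  have hε := hx _ (fun s => Ideal.Quotient.mk J (X s - C (x s)))
    (fun s t => by
      rw [← map_mul, Ideal.Quotient.eq_zero_iff_mem]
      exact Ideal.mem_sup_right (by rw [sq]; exact Ideal.mul_mem_mul (hX s) (hX t)))
    (fun g hg => by
      rw [hmk, RingHom.mem_ker, Ideal.Quotient.mkₐ_eq_mk K, Ideal.Quotient.eq_zero_iff_mem]
      exact Ideal.mem_sup_left hg)
  refine (ker_aeval_eq_span_X_sub_C x).le.trans (Ideal.span_le.mpr ?_)
  rintro _ ⟨s, rfl⟩
  exact Ideal.Quotient.eq_zero_iff_mem.mp (congrFun hε s)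

theorem finite_setOf_ker_aeval_le_sup_sq [IsDomain K] [IsNoetherianRing K] [Finite σ]
    (I : Ideal (MvPolynomial σ K)) :
    {x : σ → K | I ≤ RingHom.ker (aeval x) ∧
      RingHom.ker (aeval x) ≤ I ⊔ RingHom.ker (aeval x) ^ 2}.Finite := by
  set φ : (σ → K) → Ideal (MvPolynomial σ K ⧸ I) :=
    fun x => (RingHom.ker (aeval x)).map (Ideal.Quotient.mk I)
  have hcomap : ∀ x, I ≤ RingHom.ker (aeval x) →
      (φ x).comap (Ideal.Quotient.mk I) = RingHom.ker (aeval x) := by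
    intro x hx
    rw [Ideal.comap_map_of_surjective _ Ideal.Quotient.mk_surjective, ← RingHom.ker_eq_comap_bot,
      Ideal.mk_ker, sup_eq_left.mpr hx]
  refine Set.Finite.of_finite_image (f := φ)
    ((minimalPrimes.finite_of_isNoetherianRing (MvPolynomial σ K ⧸ I)).subset ?_) ?_
  · rintro _ ⟨x, ⟨hI, hsq⟩, rfl⟩
    have := RingHom.ker_isPrime (aeval (R := K) x)
    have : (φ x).IsPrime :=
      Ideal.map_isPrime_of_surjective Ideal.Quotient.mk_surjective (by rwa [Ideal.mk_ker])
    refine Ideal.mem_minimalPrimes_of_le_sq (IsNoetherian.noetherian _) ?_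
    simpa [φ, Ideal.map_sup, Ideal.map_pow, Ideal.map_quotient_self] using
      Ideal.map_mono hsq (f := Ideal.Quotient.mk I)
  · intro x hx y hy hxy
    have := congrArg (Ideal.comap (Ideal.Quotient.mk I)) hxy
    rw [hcomap x hx.1, hcomap y hy.1] at this
    exact ker_aeval_injective this

end MvPolynomial

namespace SqSubCube

theorem natDegree_eq_three_or_natDegree_eq_two {R : Type*} [CommRing R] {P Q : R[X]}
    (hdeg : (P ^ 2 - Q ^ 3).natDegree = 6) (hP : P.natDegree ≤ 3) (hQ : Q.natDegree ≤ 2) :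
    P.natDegree = 3 ∨ Q.natDegree = 2 := by
  by_contra! h
  have hP2 : (P ^ 2).natDegree ≤ 4 := natDegree_pow_le.trans (by omega)
  have hQ3 : (Q ^ 3).natDegree ≤ 3 := natDegree_pow_le.trans (by omega)
  have := natDegree_sub_le (P ^ 2) (Q ^ 3)
  omega

theorem isCoprime_of_squarefree_sq_sub_pow_three {R : Type*} [CommRing R] [IsBezout R]
    {a b : R} (h : Squarefree (a ^ 2 - b ^ 3)) : IsCoprime a b :=
  IsRelPrime.isCoprime fun d ha hb => h d <|
    dvd_sub ((mul_dvd_mul ha ha).trans ⟨1, by ring⟩) ((mul_dvd_mul hb hb).trans ⟨b, by ring⟩)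

variable {K : Type*} [Field K] {B : Type*} [CommRing B] [Algebra K B]

theorem eq_zero_of_two_mul_mul_eq_three_mul_sq_mul [NeZero (2 : K)] [NeZero (3 : K)]
    {P Q : K[X]} (hdeg : (P ^ 2 - Q ^ 3).natDegree = 6) (hsf : Squarefree (P ^ 2 - Q ^ 3))
    (hP : P.natDegree ≤ 3) (hQ : Q.natDegree ≤ 2) {Pd Qd : B[X]} (hPd : Pd.natDegree ≤ 3)
    (hQd : Qd.natDegree ≤ 2)
    (h : 2 * P.map (algebraMap K B) * Pd = 3 * Q.map (algebraMap K B) ^ 2 * Qd) :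
    Pd = 0 ∧ Qd = 0 := by
  nontriviality B
  have h2 : IsUnit (2 : B[X]) := by
    simpa only [map_ofNat] using (IsUnit.mk0 (2 : K) two_ne_zero).map (algebraMap K B[X])
  have h3 : IsUnit (3 : B[X]) := by
    simpa only [map_ofNat] using (IsUnit.mk0 (3 : K) three_ne_zero).map (algebraMap K B[X])
  have hPQ : IsCoprime P Q := isCoprime_of_squarefree_sq_sub_pow_three hsf
  have hcop : IsCoprime (P.map (algebraMap K B)) (Q.map (algebraMap K B) ^ 2) :=
    (hPQ.map (mapRingHom (algebraMap K B))).pow_right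
  rcases natDegree_eq_three_or_natDegree_eq_two hdeg hP hQ with hP3 | hQ2
  · have hP0 : P ≠ 0 := by rintro rfl; simp at hP3
    have hQd0 : Qd = 0 := by
      refine eq_zero_of_dvd_of_natDegree_lt_of_isUnit_leadingCoeff
        (isUnit_leadingCoeff_map_algebraMap hP0) ?_ (by rw [natDegree_map]; omega)
      refine hcop.dvd_of_dvd_mul_left ((h3.dvd_mul_left).mp ⟨2 * Pd, ?_⟩)
      linear_combination -h
    refine ⟨?_, hQd0⟩
    rwa [hQd0, mul_zero, mul_assoc, h2.mul_right_eq_zero,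
      isUnit_leadingCoeff_mul_right_eq_zero_iff (isUnit_leadingCoeff_map_algebraMap hP0)] at h
  · have hQ0 : Q ^ 2 ≠ 0 := by rintro h0; simp at h0; simp [h0] at hQ2
    have hPd0 : Pd = 0 := by
      refine eq_zero_of_dvd_of_natDegree_lt_of_isUnit_leadingCoeff
        (p := (Q ^ 2).map (algebraMap K B))
        (isUnit_leadingCoeff_map_algebraMap hQ0) ?_ (by rw [natDegree_map, natDegree_pow]; omega)
      rw [Polynomial.map_pow]
      refine hcop.symm.dvd_of_dvd_mul_left ((h2.dvd_mul_left).mp ⟨3 * Qd, ?_⟩)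
      linear_combination h
    refine ⟨hPd0, ?_⟩
    rwa [hPd0, mul_zero, eq_comm, mul_assoc, h3.mul_right_eq_zero, ← Polynomial.map_pow,
      isUnit_leadingCoeff_mul_right_eq_zero_iff (isUnit_leadingCoeff_map_algebraMap hQ0)] at h

/-- `v (.inl i)` is the coefficient of `X ^ i` in `P`, and `v (.inr j)` that of `X ^ j` in `Q`. -/
noncomputable def sqSubCube {R : Type*} [CommRing R] (v : Fin 4 ⊕ Fin 3 → R) : R[X] :=
  ofFinCoeffs (v ∘ Sum.inl) ^ 2 - ofFinCoeffs (v ∘ Sum.inr) ^ 3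

def coeffPoint (P Q : K[X]) : Fin 4 ⊕ Fin 3 → K :=
  Sum.elim (fun i => P.coeff i) (fun j => Q.coeff j)

noncomputable def sqSubCubeIdeal (f : K[X]) : Ideal (MvPolynomial (Fin 4 ⊕ Fin 3) K) :=
  Ideal.span (Set.range (sqSubCube MvPolynomial.X - f.map MvPolynomial.C).coeff)

theorem ofFinCoeffs_coeffPoint_inl {P : K[X]} (Q : K[X]) (hP : P.natDegree ≤ 3) :
    ofFinCoeffs (coeffPoint P Q ∘ Sum.inl) = P :=
  ofFinCoeffs_coeff hP

theorem ofFinCoeffs_coeffPoint_inr (P : K[X]) {Q : K[X]} (hQ : Q.natDegree ≤ 2) :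
    ofFinCoeffs (coeffPoint P Q ∘ Sum.inr) = Q :=
  ofFinCoeffs_coeff hQ

theorem le_ker_aeval_sqSubCubeIdeal_iff (f : K[X]) (y : Fin 4 ⊕ Fin 3 → B) :
    sqSubCubeIdeal f ≤ RingHom.ker (MvPolynomial.aeval y) ↔
      sqSubCube y = f.map (algebraMap K B) := by
  have hmap : (sqSubCube MvPolynomial.X - f.map MvPolynomial.C).map
      (MvPolynomial.aeval y).toRingHom = sqSubCube y - f.map (algebraMap K B) := by
    simp only [sqSubCube, Polynomial.map_sub, Polynomial.map_pow, map_ofFinCoeffs,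
      Polynomial.map_map, Function.comp_def, AlgHom.toRingHom_eq_coe, RingHom.coe_coe,
      MvPolynomial.aeval_X]
    congr 2
    ext c
    simp
  rw [sqSubCubeIdeal, Ideal.span_le, Set.range_subset_iff, ← sub_eq_zero, ← hmap,
    Polynomial.ext_iff]
  simp

theorem eq_zero_of_sqSubCube_add_eq [NeZero (2 : K)] [NeZero (3 : K)] {P Q : K[X]}
    (hdeg : (P ^ 2 - Q ^ 3).natDegree = 6) (hsf : Squarefree (P ^ 2 - Q ^ 3))
    (hP : P.natDegree ≤ 3) (hQ : Q.natDegree ≤ 2) (ε : Fin 4 ⊕ Fin 3 → B)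
    (hε : ∀ s t, ε s * ε t = 0)
    (h : sqSubCube (fun s => algebraMap K B (coeffPoint P Q s) + ε s) =
      (P ^ 2 - Q ^ 3).map (algebraMap K B)) :
    ε = 0 := by
  set Pd := ofFinCoeffs (ε ∘ Sum.inl)
  set Qd := ofFinCoeffs (ε ∘ Sum.inr)
  have hPd : Pd * Pd = 0 := ofFinCoeffs_mul_self_eq_zero fun _ _ => hε _ _
  have hQd : Qd * Qd = 0 := ofFinCoeffs_mul_self_eq_zero fun _ _ => hε _ _
  have hP' : ofFinCoeffs ((fun s => algebraMap K B (coeffPoint P Q s) + ε s) ∘ Sum.inl) =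
      P.map (algebraMap K B) + Pd := by
    rw [show (fun s => algebraMap K B (coeffPoint P Q s) + ε s) ∘ Sum.inl =
        algebraMap K B ∘ (coeffPoint P Q ∘ Sum.inl) + ε ∘ Sum.inl from rfl,
      ofFinCoeffs_add, ← map_ofFinCoeffs, ofFinCoeffs_coeffPoint_inl Q hP]
  have hQ' : ofFinCoeffs ((fun s => algebraMap K B (coeffPoint P Q s) + ε s) ∘ Sum.inr) =
      Q.map (algebraMap K B) + Qd := by
    rw [show (fun s => algebraMap K B (coeffPoint P Q s) + ε s) ∘ Sum.inr =
        algebraMap K B ∘ (coeffPoint P Q ∘ Sum.inr) + ε ∘ Sum.inr from rfl,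
      ofFinCoeffs_add, ← map_ofFinCoeffs, ofFinCoeffs_coeffPoint_inr P hQ]
  rw [sqSubCube, hP', hQ', Polynomial.map_sub, Polynomial.map_pow, Polynomial.map_pow] at h
  obtain ⟨hPd0, hQd0⟩ := eq_zero_of_two_mul_mul_eq_three_mul_sq_mul hdeg hsf hP hQ
    (natDegree_ofFinCoeffs_le _) (natDegree_ofFinCoeffs_le _)
    (by linear_combination h - hPd + (3 * Q.map (algebraMap K B) + Qd) * hQd)
  funext s
  rcases s with i | j
  · simpa [Pd, coeff_ofFinCoeffs] using congrArg (coeff · i) hPd0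
  · simpa [Qd, coeff_ofFinCoeffs] using congrArg (coeff · j) hQd0

end SqSubCube

open SqSubCube in
/-- A squarefree degree-6 polynomial over ℂ admits only finitely many decompositions
`f = P² - Q³` with `deg P ≤ 3`, `deg Q ≤ 2`. -/
theorem stmt1 (f : Polynomial ℂ) (hdeg : f.natDegree = 6) (hsf : Squarefree f) :
    {PQ : Polynomial ℂ × Polynomial ℂ |
      PQ.1.degree ≤ 3 ∧ PQ.2.degree ≤ 2 ∧ f = PQ.1 ^ 2 - PQ.2 ^ 3}.Finite := by
  refine ((MvPolynomial.finite_setOf_ker_aeval_le_sup_sq (sqSubCubeIdeal f)).image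
    fun x => (ofFinCoeffs (x ∘ Sum.inl), ofFinCoeffs (x ∘ Sum.inr))).subset ?_
  rintro ⟨P, Q⟩ ⟨hP, hQ, rfl⟩
  replace hP : P.natDegree ≤ 3 := natDegree_le_iff_degree_le.mpr hP
  replace hQ : Q.natDegree ≤ 2 := natDegree_le_iff_degree_le.mpr hQ
  refine ⟨coeffPoint P Q, ⟨?_, ?_⟩, ?_⟩
  · rw [le_ker_aeval_sqSubCubeIdeal_iff, Algebra.algebraMap_self, Polynomial.map_id, sqSubCube,
      ofFinCoeffs_coeffPoint_inl Q hP, ofFinCoeffs_coeffPoint_inr P hQ]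
  · exact MvPolynomial.ker_aeval_le_sup_sq fun B _ _ ε hε hI =>
      eq_zero_of_sqSubCube_add_eq hdeg hsf hP hQ ε hε ((le_ker_aeval_sqSubCubeIdeal_iff _ _).mp hI)
  · simp only [ofFinCoeffs_coeffPoint_inl Q hP, ofFinCoeffs_coeffPoint_inr P hQ]
end

section
/- Let ζ be a primitive Δ-th root of unity and let G = {(θ, η) : θ^Δ = η^Δ = 1, θⁿ = θ^r η^s = η^m} ⊆ ℂ× × ℂ×, where Δ = |nm − rm − sn| ≠ 0. Then G is isomorphic to the quotient L/(ΔℤΔ²) where L = {(p,q) ∈ ℤ² : pn − qm ≡ pr − q(m−s) ≡ 0 (mod Δ)}, and G has order Δ. Moreover G is cyclic if and only if gcd(m, n, r, s) = 1. -/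
/-! The map `(p, q) ↦ (ζ ^ p, ζ ^ q)` sends `ℤ²` onto the pairs of `Δ`-th roots of unity with
kernel `Δℤ²`, and pulls the relations defining `G` back to the congruences defining `L`; hence
`G ≃ L / Δℤ²`. Writing `A` for the matrix of these congruences, `|det A| = Δ` and
`A * adj A = det A • 1` show that `L = adj A • ℤ²`, a lattice of index `Δ`, so `|G| = Δ² / Δ = Δ`.
If `g = gcd(m, n, r, s) ≠ 1`, then `G` contains `μ_g × μ_g`, which is not cyclic. If `g = 1`, the
images of the generators `(m, n)` and `(m - s, r)` of `L` force the exponent of `G` up to `Δ`. -/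

open Module

theorem AddSubgroup.mem_closure_pair_iff {M : Type*} [AddCommGroup M] {x y w : M} :
    w ∈ AddSubgroup.closure {x, y} ↔ ∃ a b : ℤ, a • x + b • y = w := by
  rw [← Submodule.span_int_eq_addSubgroupClosure, Submodule.mem_toAddSubgroup,
    Submodule.mem_span_pair]

theorem AddSubgroup.index_closure_pair (x y : ℤ × ℤ) (h : x.1 * y.2 - x.2 * y.1 ≠ 0) :
    (AddSubgroup.closure {x, y}).index = (x.1 * y.2 - x.2 * y.1).natAbs := by
  have hli : LinearIndependent ℤ ![x, y] := by
    refine LinearIndependent.pair_iff.2 fun s t hst => ?_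
    have h₁ : s * x.1 + t * y.1 = 0 := by simpa using congrArg Prod.fst hst
    have h₂ : s * x.2 + t * y.2 = 0 := by simpa using congrArg Prod.snd hst
    constructor
    · refine (mul_eq_zero.1 ?_).resolve_right h
      linear_combination y.2 * h₁ - y.1 * h₂
    · refine (mul_eq_zero.1 ?_).resolve_right h
      linear_combination x.1 * h₂ - x.2 * h₁
  have hrange : Set.range ![x, y] = {x, y} := by
    rw [Matrix.range_cons, Matrix.range_cons, Matrix.range_empty, Set.union_empty,
      Set.singleton_union]
  rw [← Submodule.span_int_eq_addSubgroupClosure, ← hrange, AddSubgroup.index]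
  refine (Submodule.natAbs_det_basis_change (Basis.finTwoProd ℤ) _ (Basis.span hli)).symm.trans ?_
  rw [Basis.det_apply, Matrix.det_fin_two]
  simp [Basis.toMatrix_apply, Basis.span_apply, mul_comm]

theorem mem_closure_diagonal_iff (k : ℤ) (w : ℤ × ℤ) :
    w ∈ AddSubgroup.closure {(k, 0), (0, k)} ↔ k ∣ w.1 ∧ k ∣ w.2 := by
  rw [AddSubgroup.mem_closure_pair_iff]
  constructor
  · rintro ⟨a, b, rfl⟩
    simp
  · rintro ⟨⟨a, ha⟩, ⟨b, hb⟩⟩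
    exact ⟨a, b, by ext <;> simp [ha, hb, mul_comm]⟩

/-- Up to sign, the columns of `adj !![n, -m; r, s - m]`. -/
def relationLattice (n m r s : ℤ) : AddSubgroup (ℤ × ℤ) :=
  AddSubgroup.closure {(m, n), (m - s, r)}

section relationLattice

variable {n m r s : ℤ}

theorem mem_relationLattice_iff (hD : n * m - r * m - s * n ≠ 0) (w : ℤ × ℤ) :
    w ∈ relationLattice n m r s ↔
      n * m - r * m - s * n ∣ w.1 * n - w.2 * m ∧
        n * m - r * m - s * n ∣ w.1 * r - w.2 * (m - s) := by
  rw [relationLattice, AddSubgroup.mem_closure_pair_iff]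
  constructor
  · rintro ⟨a, b, rfl⟩
    simp only [Prod.fst_add, Prod.snd_add, Prod.smul_fst, Prod.smul_snd, smul_eq_mul]
    exact ⟨⟨b, by ring⟩, ⟨-a, by ring⟩⟩
  · rintro ⟨⟨k₁, hk₁⟩, ⟨k₂, hk₂⟩⟩
    refine ⟨-k₂, k₁, Prod.ext (mul_left_cancel₀ hD ?_) (mul_left_cancel₀ hD ?_)⟩
    · simp only [Prod.fst_add, Prod.smul_fst, smul_eq_mul]
      linear_combination m * hk₂ - (m - s) * hk₁
    · simp only [Prod.snd_add, Prod.smul_snd, smul_eq_mul]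
      linear_combination n * hk₂ - r * hk₁

theorem index_relationLattice (hD : n * m - r * m - s * n ≠ 0) :
    (relationLattice n m r s).index = (n * m - r * m - s * n).natAbs := by
  rw [relationLattice, AddSubgroup.index_closure_pair]
  · rw [← Int.natAbs_neg]; congr 1; ring
  · contrapose! hD; linear_combination -hD

theorem relIndex_closure_diagonal_relationLattice {Δ : ℕ}
    (hΔ : Δ = (n * m - r * m - s * n).natAbs) (hΔ₀ : Δ ≠ 0) :
    (AddSubgroup.closure {((Δ : ℤ), 0), (0, (Δ : ℤ))}).relIndex (relationLattice n m r s) = Δ := by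
  have hD : n * m - r * m - s * n ≠ 0 := Int.natAbs_ne_zero.1 (hΔ ▸ hΔ₀)
  have hle : AddSubgroup.closure {((Δ : ℤ), 0), (0, (Δ : ℤ))} ≤ relationLattice n m r s := by
    intro w hw
    rw [mem_closure_diagonal_iff, hΔ, Int.natAbs_dvd, Int.natAbs_dvd] at hw
    rw [mem_relationLattice_iff hD]
    exact ⟨dvd_sub (hw.1.mul_right _) (hw.2.mul_right _),
      dvd_sub (hw.1.mul_right _) (hw.2.mul_right _)⟩
  have hmul := AddSubgroup.relIndex_mul_index hle
  rw [index_relationLattice hD, ← hΔ, AddSubgroup.index_closure_pair _ _ (by simpa using hΔ₀)]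
    at hmul
  refine Nat.eq_of_mul_eq_mul_right (Nat.pos_of_ne_zero hΔ₀) (hmul.trans ?_)
  simp [Int.natAbs_mul]

end relationLattice

section zpowPairHom

variable {M : Type*} [Group M]

def zpowPairHom (u : M) : ℤ × ℤ →+ Additive (M × M) :=
  AddMonoidHom.mk' (fun w => Additive.ofMul (u ^ w.1, u ^ w.2)) fun w w' => by
    rw [← ofMul_mul, Prod.mk_mul_mk, ← zpow_add, ← zpow_add]
    rfl

@[simp]
theorem toMul_zpowPairHom (u : M) (w : ℤ × ℤ) :
    (zpowPairHom u w).toMul = (u ^ w.1, u ^ w.2) := rfl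

theorem mem_ker_zpowPairHom (u : M) (w : ℤ × ℤ) :
    w ∈ (zpowPairHom u).ker ↔ (orderOf u : ℤ) ∣ w.1 ∧ (orderOf u : ℤ) ∣ w.2 := by
  rw [AddMonoidHom.mem_ker, ← toMul_eq_one, toMul_zpowPairHom, Prod.mk_eq_one,
    orderOf_dvd_iff_zpow_eq_one, orderOf_dvd_iff_zpow_eq_one]

theorem exponent_nsmul_mem_ker_zpowPairHom {u : M} (G : Subgroup (M × M)) {w : ℤ × ℤ}
    (hw : (zpowPairHom u w).toMul ∈ G) : Monoid.exponent G • w ∈ (zpowPairHom u).ker := by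
  rw [AddMonoidHom.mem_ker, map_nsmul, ← toMul_eq_one, toMul_nsmul]
  exact congrArg Subtype.val (Monoid.pow_exponent_eq_one (⟨_, hw⟩ : G))

end zpowPairHom

theorem AddMonoidHom.nonempty_quotient_mulEquiv {A M : Type*} [AddCommGroup A] [Group M]
    (φ : A →+ Additive M) {L K : AddSubgroup A} {G : Subgroup M} (hker : φ.ker = K)
    (hmem : ∀ a, (φ a).toMul ∈ G ↔ a ∈ L) (hsurj : ∀ x ∈ G, ∃ a, (φ a).toMul = x) :
    Nonempty (Multiplicative (L ⧸ K.addSubgroupOf L) ≃* G) := by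
  let ψ : L →+ Additive G := AddMonoidHom.mk'
    (fun a => Additive.ofMul ⟨(φ a).toMul, (hmem a).2 a.2⟩) fun a b => by ext; simp
  have hψ : ψ.ker = K.addSubgroupOf L := by
    ext a
    simp [ψ, AddSubgroup.mem_addSubgroupOf, ← hker]
  have hψsurj : Function.Surjective ψ := by
    intro x
    obtain ⟨a, ha⟩ := hsurj x.toMul x.toMul.2
    exact ⟨⟨a, (hmem a).1 (ha ▸ x.toMul.2)⟩, by ext; simp [ψ, ha]⟩
  exact ⟨AddEquiv.toMultiplicativeLeft ((QuotientAddGroup.quotientAddEquivOfEq hψ).symm.trans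
    (QuotientAddGroup.quotientKerEquivOfSurjective ψ hψsurj))⟩

def IsRootPair {M : Type*} [Monoid M] (Δ n m r s : ℕ) (x : M × M) : Prop :=
  x.1 ^ Δ = 1 ∧ x.2 ^ Δ = 1 ∧ x.1 ^ n = x.1 ^ r * x.2 ^ s ∧ x.1 ^ r * x.2 ^ s = x.2 ^ m

section IsRootPair

variable {M : Type*} {Δ n m r s : ℕ}

theorem isRootPair_zpow_iff [CommGroup M] {u : M} (hu : orderOf u = Δ) (w : ℤ × ℤ) :
    IsRootPair Δ n m r s (u ^ w.1, u ^ w.2) ↔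
      (Δ : ℤ) ∣ w.1 * n - w.2 * m ∧ (Δ : ℤ) ∣ w.1 * r - w.2 * (m - s) := by
  have hpow (a : ℤ) (k : ℕ) : (u ^ a) ^ k = u ^ (a * k) := by rw [← zpow_natCast, ← zpow_mul]
  have heq (a b : ℤ) : u ^ a = u ^ b ↔ (a : ZMod Δ) = b := by
    rw [zpow_eq_zpow_iff_modEq, hu, ZMod.intCast_eq_intCast_iff]
  have hone (a : ℤ) : u ^ a = 1 ↔ (a : ZMod Δ) = 0 := by
    rw [← zpow_zero u, heq, Int.cast_zero]
  simp only [IsRootPair, hpow, ← zpow_add, heq, hone, ← ZMod.intCast_zmod_eq_zero_iff_dvd]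
  push_cast
  simp only [ZMod.natCast_self, mul_zero, true_and]
  constructor
  · rintro ⟨h₁, h₂⟩
    exact ⟨by linear_combination h₁ + h₂, by linear_combination h₂⟩
  · rintro ⟨h₁, h₂⟩
    exact ⟨by linear_combination h₁ - h₂, by linear_combination h₂⟩

theorem IsRootPair.of_pow_eq_one [CommMonoid M] {g : ℕ} (hΔ : g ∣ Δ) (hn : g ∣ n) (hm : g ∣ m)
    (hr : g ∣ r) (hs : g ∣ s) {x : M × M} (h₁ : x.1 ^ g = 1) (h₂ : x.2 ^ g = 1) :
    IsRootPair Δ n m r s x := by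
  have hpow {y : M} (hy : y ^ g = 1) {k : ℕ} (hk : g ∣ k) : y ^ k = 1 := by
    obtain ⟨c, rfl⟩ := hk
    rw [pow_mul, hy, one_pow]
  simp only [IsRootPair, hpow h₁ hΔ, hpow h₂ hΔ, hpow h₁ hn, hpow h₁ hr, hpow h₂ hs, hpow h₂ hm,
    mul_one, and_self]

theorem not_isCyclic_rootsOfUnity_prod {g : ℕ} [NeZero g] (hg : g ≠ 1) :
    ¬IsCyclic ((rootsOfUnity g ℂ).prod (rootsOfUnity g ℂ)) := by
  rw [(Subgroup.prodEquiv _ _).isCyclic, Group.isCyclic_prod_iff, Complex.card_rootsOfUnity,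
    Nat.coprime_self]
  exact fun h => hg h.2.2

theorem gcd_eq_one_of_isCyclic (hΔ : Δ = ((n * m : ℤ) - r * m - s * n).natAbs) (hΔ₀ : Δ ≠ 0)
    (G : Subgroup (ℂˣ × ℂˣ)) (hG : ∀ x, IsRootPair Δ n m r s x → x ∈ G) [IsCyclic G] :
    Nat.gcd (Nat.gcd m n) (Nat.gcd r s) = 1 := by
  set g := Nat.gcd (Nat.gcd m n) (Nat.gcd r s)
  have hgn : g ∣ n := (Nat.gcd_dvd_left _ _).trans (Nat.gcd_dvd_right _ _)
  have hgm : g ∣ m := (Nat.gcd_dvd_left _ _).trans (Nat.gcd_dvd_left _ _)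
  have hgr : g ∣ r := (Nat.gcd_dvd_right _ _).trans (Nat.gcd_dvd_left _ _)
  have hgs : g ∣ s := (Nat.gcd_dvd_right _ _).trans (Nat.gcd_dvd_right _ _)
  have hgΔ : g ∣ Δ := by
    rw [hΔ, ← Int.ofNat_dvd_left]
    have h (k : ℕ) (hk : g ∣ k) : (g : ℤ) ∣ k := Int.natCast_dvd_natCast.2 hk
    exact dvd_sub (dvd_sub ((h n hgn).mul_right _) ((h r hgr).mul_right _))
      ((h s hgs).mul_right _)
  have : NeZero g := ⟨fun h => hΔ₀ (Nat.eq_zero_of_zero_dvd (h ▸ hgΔ))⟩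
  have hle : (rootsOfUnity g ℂ).prod (rootsOfUnity g ℂ) ≤ G := fun x hx =>
    hG x <| .of_pow_eq_one hgΔ hgn hgm hgr hgs
      ((mem_rootsOfUnity _ _).1 (Subgroup.mem_prod.1 hx).1)
      ((mem_rootsOfUnity _ _).1 (Subgroup.mem_prod.1 hx).2)
  by_contra hg
  exact not_isCyclic_rootsOfUnity_prod hg (Subgroup.isCyclic_of_le hle)

end IsRootPair

theorem isCyclic_of_gcd_eq_one {M : Type*} [CommGroup M] {Δ n m r s : ℕ} {u : M}
    (hu : orderOf u = Δ) (hΔ₀ : Δ ≠ 0) (G : Subgroup (M × M)) (hcard : Nat.card G = Δ)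
    (hL : ∀ w ∈ relationLattice n m r s, (zpowPairHom u w).toMul ∈ G)
    (hgcd : Nat.gcd (Nat.gcd m n) (Nat.gcd r s) = 1) : IsCyclic G := by
  have : Finite G := Nat.finite_of_card_ne_zero (hcard ▸ hΔ₀)
  set e := Monoid.exponent G
  have hdvd (w : ℤ × ℤ) (hw : w ∈ relationLattice n m r s) :
      (Δ : ℤ) ∣ w.1 * e ∧ (Δ : ℤ) ∣ w.2 * e := by
    have := (mem_ker_zpowPairHom u _).1 (exponent_nsmul_mem_ker_zpowPairHom G (hL w hw))
    simpa [hu, mul_comm] using this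
  obtain ⟨hm, hn⟩ : (Δ : ℤ) ∣ m * e ∧ (Δ : ℤ) ∣ n * e :=
    hdvd (m, n) (AddSubgroup.subset_closure (by simp))
  obtain ⟨hms, hr⟩ : (Δ : ℤ) ∣ (m - s) * e ∧ (Δ : ℤ) ∣ r * e :=
    hdvd ((m : ℤ) - s, r) (AddSubgroup.subset_closure (by simp))
  have hs : (Δ : ℤ) ∣ s * e := by simpa [sub_mul] using dvd_sub hm hms
  have hΔe : Δ ∣ e := by
    have hm : Δ ∣ m * e := by exact_mod_cast hm
    have hn : Δ ∣ n * e := by exact_mod_cast hn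
    have hr : Δ ∣ r * e := by exact_mod_cast hr
    have hs : Δ ∣ s * e := by exact_mod_cast hs
    have := Nat.dvd_gcd (Nat.dvd_gcd hm hn) (Nat.dvd_gcd hr hs)
    rwa [Nat.gcd_mul_right, Nat.gcd_mul_right, Nat.gcd_mul_right, hgcd, one_mul] at this
  have heΔ : e ∣ Δ := hcard ▸ Group.exponent_dvd_nat_card
  exact IsCyclic.of_exponent_eq_card ((Nat.dvd_antisymm heΔ hΔe).trans hcard.symm)
/-- The group `G` of pairs of Δ-th roots of unity `(θ, η)` with `θⁿ = θ^r η^s = η^m` is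
isomorphic to `L / (Δℤ)²` where `L = {(p,q) : pn - qm ≡ pr - q(m-s) ≡ 0 mod Δ}`; it has
order `Δ`, and it is cyclic iff `gcd(m, n, r, s) = 1`. -/
theorem stmt4 (n m r s : ℕ) (Δ : ℕ)
    (hΔdef : Δ = ((n * m : ℤ) - r * m - s * n).natAbs) (hΔ : Δ ≠ 0)
    (ζ : ℂ) (hζ : IsPrimitiveRoot ζ Δ)
    (G : Subgroup (ℂˣ × ℂˣ))
    (hG : (G : Set (ℂˣ × ℂˣ)) =
      {p | p.1 ^ Δ = 1 ∧ p.2 ^ Δ = 1 ∧ p.1 ^ n = p.1 ^ r * p.2 ^ s ∧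
        p.1 ^ r * p.2 ^ s = p.2 ^ m})
    (L : AddSubgroup (ℤ × ℤ))
    (hL : (L : Set (ℤ × ℤ)) =
      {pq | (Δ : ℤ) ∣ pq.1 * n - pq.2 * m ∧
        (Δ : ℤ) ∣ pq.1 * r - pq.2 * ((m : ℤ) - s)}) :
    Nonempty (Multiplicative
        (↥L ⧸ (AddSubgroup.closure
          ({((Δ : ℤ), (0 : ℤ)), ((0 : ℤ), (Δ : ℤ))} : Set (ℤ × ℤ))).addSubgroupOf L) ≃* ↥G)
    ∧ Nat.card G = Δ
    ∧ (IsCyclic ↥G ↔ Nat.gcd (Nat.gcd m n) (Nat.gcd r s) = 1) := by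
  have : NeZero Δ := ⟨hΔ⟩
  have hD : (n * m : ℤ) - r * m - s * n ≠ 0 := Int.natAbs_ne_zero.1 (hΔdef ▸ hΔ)
  have hLeq : L = relationLattice n m r s := by
    ext w
    rw [← SetLike.mem_coe, hL, mem_relationLattice_iff hD, Set.mem_ofPred_eq, hΔdef,
      Int.natAbs_dvd, Int.natAbs_dvd]
  have hGeq (x : ℂˣ × ℂˣ) : x ∈ G ↔ IsRootPair Δ n m r s x := by
    rw [← SetLike.mem_coe, hG]; rfl
  let u := (hζ.isUnit hΔ).unit
  have hu : IsPrimitiveRoot u Δ := hζ.isUnit_unit hΔ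
  have hmem (w : ℤ × ℤ) : (zpowPairHom u w).toMul ∈ G ↔ w ∈ L := by
    rw [hGeq, toMul_zpowPairHom, isRootPair_zpow_iff hu.eq_orderOf.symm, ← SetLike.mem_coe, hL]
    rfl
  have hsurj (x : ℂˣ × ℂˣ) (hx : x ∈ G) : ∃ w, (zpowPairHom u w).toMul = x := by
    obtain ⟨h₁, h₂, -⟩ := (hGeq x).1 hx
    obtain ⟨a, ha⟩ := Subgroup.mem_zpowers_iff.1 (hu.zpowers_eq ▸ (mem_rootsOfUnity _ _).2 h₁)
    obtain ⟨b, hb⟩ := Subgroup.mem_zpowers_iff.1 (hu.zpowers_eq ▸ (mem_rootsOfUnity _ _).2 h₂)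
    exact ⟨(a, b), by simp [ha, hb]⟩
  have hker : (zpowPairHom u).ker = AddSubgroup.closure {((Δ : ℤ), 0), (0, (Δ : ℤ))} := by
    ext w
    rw [mem_ker_zpowPairHom, mem_closure_diagonal_iff, ← hu.eq_orderOf]
  obtain ⟨e⟩ := (zpowPairHom u).nonempty_quotient_mulEquiv hker hmem hsurj
  have hcard : Nat.card G = Δ := by
    rw [← Nat.card_congr e.toEquiv, Nat.card_congr Multiplicative.toAdd, hLeq]
    exact relIndex_closure_diagonal_relationLattice hΔdef hΔ
  refine ⟨⟨e⟩, hcard, fun _ => gcd_eq_one_of_isCyclic hΔdef hΔ G fun x => (hGeq x).2, ?_⟩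
  exact isCyclic_of_gcd_eq_one hu.eq_orderOf.symm hΔ G hcard fun w hw => (hmem w).2 (hLeq ▸ hw)
end
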